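/- arXiv:2112.10349 — 4 statements merged into one kernel-verified Lean document; each statement's English description precedes it below -/
import Mathlib

section
/- Let ν > 2 and let m be any real number with 0 < m < ν. Set κ_m = Γ((ν+1)/2)(ν − m) m^{ν/2 − 1} / (2√π Γ(ν/2)). Then for every t > 0, 1 / ((1 − F_ν(t)) (t² + ν)^{(ν−1)/2}) ≤ √(t² + ν − m) / κ_m. -/
/-!
With `A = u² + ν`, `B = u² + ν - m` and `κ = κ_m`, the function `G = κ A^{-(ν-1)/2} B^{-1/2}`
tends to `0` at infinity and `0 ≤ -G'` is at most the t density on `(0, ∞)`, so integrating over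
`(t, ∞)` gives `G(t) ≤ 1 - F_ν(t)`, which is the claim after rearranging. Using `u ≤ √B` and
`B ≥ ν - m`, the derivative bound reduces to `x^q (2q + 2 - (2q + 1) x) ≤ 2` for
`x = m / ν ∈ [0, 1]` and `q = ν/2 - 1`, which follows from `x ≤ e^{x-1}` and `1 + y ≤ e^y`.
-/

open MeasureTheory

/-- The CDF of the Student's t distribution with `ν` degrees of freedom. -/
noncomputable def tCDF (ν t : ℝ) : ℝ :=
  ∫ u in Set.Iic t,
    (Real.Gamma ((ν + 1) / 2) / (Real.sqrt (ν * Real.pi) * Real.Gamma (ν / 2))) *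
      (1 + u ^ 2 / ν) ^ (-((ν + 1) / 2))

open Set Real Filter Topology

lemma integral_one_add_sq_rpow_neg {p : ℝ} (hp : 1 / 2 < p) :
    ∫ x : ℝ, (1 + x ^ 2) ^ (-p) = √π * Gamma (p - 1 / 2) / Gamma p := by
  have hp0 : 0 < p := by linarith
  -- Fubini for `s ^ (p - 1) e ^ (-(1 + x²) s)`: in `s` a Gamma integral, in `x` a Gaussian.
  set k : ℝ → ℝ → ℝ := fun x s ↦ s ^ (p - 1) * exp (-((1 + x ^ 2) * s))
  have integral_in_s (x : ℝ) : ∫ s in Ioi 0, k x s = Gamma p * (1 + x ^ 2) ^ (-p) := by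
    have hx : 0 < 1 + x ^ 2 := by positivity
    rw [integral_rpow_mul_exp_neg_mul_Ioi hp0 hx, one_div, inv_rpow hx.le, rpow_neg hx.le, mul_comm]
  have k_eq {s : ℝ} (x : ℝ) : k x s = s ^ (p - 1) * exp (-s) * exp (-s * x ^ 2) := by
    simp only [k, mul_assoc, ← exp_add]; ring_nf
  have integral_in_x {s : ℝ} (hs : 0 < s) :
      ∫ x, k x s = √π * (exp (-s) * s ^ (p - 1 / 2 - 1)) := by
    simp_rw [k_eq, integral_const_mul, integral_gaussian]
    rw [div_eq_mul_inv, sqrt_mul pi_pos.le, sqrt_inv, sqrt_eq_rpow s, ← rpow_neg hs.le,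
      show p - 1 / 2 - 1 = (p - 1) + -(1 / 2) by ring, rpow_add hs]
    ring
  have hk : Integrable (Function.uncurry k) (volume.prod (volume.restrict (Ioi 0))) := by
    rw [integrable_prod_iff' (by fun_prop)]
    constructor
    · filter_upwards [ae_restrict_mem measurableSet_Ioi] with s hs
      simp only [Function.uncurry_apply_pair, k_eq]
      exact (integrable_exp_neg_mul_sq hs).const_mul _
    · refine (((GammaIntegral_convergent (by linarith : 0 < p - 1 / 2))).const_mul √π).congr ?_
      filter_upwards [ae_restrict_mem measurableSet_Ioi] with s (hs : 0 < s)
      have : ∀ x, 0 ≤ k x s := fun x ↦ by positivity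
      simp only [Function.uncurry_apply_pair, norm_of_nonneg (this _), integral_in_x hs]
  have key := integral_integral_swap hk
  simp_rw [integral_in_s, integral_const_mul] at key
  rw [setIntegral_congr_fun measurableSet_Ioi (fun s hs ↦ integral_in_x hs), integral_const_mul,
    ← Gamma_eq_integral (by linarith)] at key
  rw [← key]
  field_simp

noncomputable def tPDF (ν u : ℝ) : ℝ :=
  Gamma ((ν + 1) / 2) / (√(ν * π) * Gamma (ν / 2)) * (1 + u ^ 2 / ν) ^ (-((ν + 1) / 2))

section StudentT

variable {ν : ℝ}

lemma tPDF_eq (hν : 0 < ν) : tPDF ν = fun u ↦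
    Gamma ((ν + 1) / 2) / (√(ν * π) * Gamma (ν / 2)) * (1 + (u / √ν) ^ 2) ^ (-((ν + 1) / 2)) := by
  ext u
  rw [tPDF, div_pow, sq_sqrt hν.le]

lemma integrable_tPDF (hν : 0 < ν) : Integrable (tPDF ν) := by
  have h := integrable_rpow_neg_one_add_norm_sq (E := ℝ) (μ := volume) (r := ν + 1) (by simpa)
  simp only [norm_eq_abs, sq_abs, neg_div] at h
  rw [tPDF_eq hν]
  exact (h.comp_div (sqrt_pos.2 hν).ne').const_mul _

lemma integral_tPDF (hν : 0 < ν) : ∫ u, tPDF ν u = 1 := by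
  rw [tPDF_eq hν, integral_const_mul,
    Measure.integral_comp_div (fun x ↦ (1 + x ^ 2) ^ (-((ν + 1) / 2))), smul_eq_mul,
    integral_one_add_sq_rpow_neg (by linarith : 1 / 2 < (ν + 1) / 2),
    abs_of_pos (sqrt_pos.2 hν), sqrt_mul hν.le, show (ν + 1) / 2 - 1 / 2 = ν / 2 by ring]
  have := Gamma_pos_of_pos (by linarith : 0 < (ν + 1) / 2)
  have := Gamma_pos_of_pos (by linarith : 0 < ν / 2)
  have := sqrt_pos.2 hν
  have := sqrt_pos.2 pi_pos
  field_simp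

lemma tCDF_eq_setIntegral_tPDF (ν t : ℝ) : tCDF ν t = ∫ u in Iic t, tPDF ν u := rfl

lemma one_sub_tCDF (hν : 0 < ν) (t : ℝ) : 1 - tCDF ν t = ∫ u in Ioi t, tPDF ν u := by
  rw [← integral_tPDF hν, tCDF_eq_setIntegral_tPDF, ← intervalIntegral.integral_Iic_add_Ioi
    (integrable_tPDF hν).integrableOn (integrable_tPDF hν).integrableOn, add_sub_cancel_left]

end StudentT

lemma le_setIntegral_Ioi_of_hasDerivAt {f g g' : ℝ → ℝ} {a : ℝ}
    (hderiv : ∀ x ∈ Ici a, HasDerivAt g (g' x) x) (hg' : ∀ x ∈ Ioi a, g' x ≤ 0)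
    (hg : Tendsto g atTop (𝓝 0)) (hf : IntegrableOn f (Ioi a))
    (hle : ∀ x ∈ Ioi a, -g' x ≤ f x) : g a ≤ ∫ x in Ioi a, f x := by
  have hint := integrableOn_Ioi_deriv_of_nonpos' hderiv hg' hg
  calc g a = ∫ x in Ioi a, -g' x := by
        rw [integral_neg, integral_Ioi_of_hasDerivAt_of_nonpos' hderiv hg' hg, zero_sub, neg_neg]
    _ ≤ ∫ x in Ioi a, f x := setIntegral_mono_on hint.neg hf measurableSet_Ioi hle

lemma rpow_mul_sub_le_two {q x : ℝ} (hq : 0 ≤ q) (hx₀ : 0 ≤ x) (hx₁ : x ≤ 1) :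
    x ^ q * (2 * q + 2 - (2 * q + 1) * x) ≤ 2 := by
  have hpow : x ^ q ≤ exp (-(q * (1 - x))) := by
    calc x ^ q ≤ exp (-(1 - x)) ^ q := rpow_le_rpow hx₀ (by linarith [add_one_le_exp (-(1 - x))]) hq
      _ = exp (-(q * (1 - x))) := by rw [← exp_mul]; ring_nf
  have hlin : 2 * q + 2 - (2 * q + 1) * x ≤ 2 * exp (q * (1 - x)) := by
    nlinarith [add_one_le_exp (q * (1 - x))]
  calc x ^ q * (2 * q + 2 - (2 * q + 1) * x) ≤ exp (-(q * (1 - x))) * (2 * exp (q * (1 - x))) := by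
        gcongr
        nlinarith
    _ = 2 := by rw [mul_left_comm, ← exp_add, neg_add_cancel, exp_zero, mul_one]

lemma sq_sub_mul_mul_rpow_le {ν m : ℝ} (hν : 2 ≤ ν) (hm : 0 ≤ m) (hmν : m ≤ ν) :
    (ν ^ 2 - (ν - 1) * m) * m ^ (ν / 2 - 1) ≤ 2 * ν ^ (ν / 2) := by
  have hν₀ : 0 < ν := by linarith
  obtain ⟨x, rfl⟩ : ∃ x, m = ν * x := ⟨m / ν, by field_simp⟩
  have hx₀ : 0 ≤ x := nonneg_of_mul_nonneg_right hm hν₀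
  have hx₁ : x ≤ 1 := le_of_mul_le_mul_left (by linarith) hν₀
  have hνq : ν ^ (ν / 2) = ν ^ (ν / 2 - 1) * ν := by rw [← rpow_add_one hν₀.ne']; ring_nf
  calc (ν ^ 2 - (ν - 1) * (ν * x)) * (ν * x) ^ (ν / 2 - 1)
      = ν ^ (ν / 2 - 1) * ν *
          (x ^ (ν / 2 - 1) * (2 * (ν / 2 - 1) + 2 - (2 * (ν / 2 - 1) + 1) * x)) := by
        rw [mul_rpow hν₀.le hx₀]; ring
    _ ≤ ν ^ (ν / 2 - 1) * ν * 2 := by gcongr; exact rpow_mul_sub_le_two (by linarith) hx₀ hx₁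
    _ = 2 * ν ^ (ν / 2) := by rw [hνq]; ring

lemma sub_mul_rpow_mul_le {ν m u : ℝ} (hν : 2 ≤ ν) (hm : 0 ≤ m) (hmν : m ≤ ν) :
    (ν - m) * m ^ (ν / 2 - 1) * u * (ν * (u ^ 2 + ν - m) + m) ≤
      2 * ν ^ (ν / 2) * ((u ^ 2 + ν - m) * √(u ^ 2 + ν - m)) := by
  set B := u ^ 2 + ν - m
  have hB : ν - m ≤ B := by simp only [B]; nlinarith
  have hu_le : u ≤ √B := le_sqrt_of_sq_le (by simp only [B]; linarith)
  have hprod : (ν - m) * (ν * B + m) ≤ B * (ν ^ 2 - (ν - 1) * m) := by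
    nlinarith [mul_le_mul_of_nonneg_left hB hm]
  have hB₀ : 0 ≤ B := by linarith
  calc (ν - m) * m ^ (ν / 2 - 1) * u * (ν * B + m)
      = m ^ (ν / 2 - 1) * u * ((ν - m) * (ν * B + m)) := by ring
    _ ≤ m ^ (ν / 2 - 1) * √B * (B * (ν ^ 2 - (ν - 1) * m)) := by gcongr
    _ = (ν ^ 2 - (ν - 1) * m) * m ^ (ν / 2 - 1) * (B * √B) := by ring
    _ ≤ 2 * ν ^ (ν / 2) * (B * √B) :=
        mul_le_mul_of_nonneg_right (sq_sub_mul_mul_rpow_le hν hm hmν) (by positivity)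

noncomputable def tMillsConst (ν m : ℝ) : ℝ :=
  Gamma ((ν + 1) / 2) * (ν - m) * m ^ (ν / 2 - 1) / (2 * √π * Gamma (ν / 2))

noncomputable def tTailLowerBound (ν m u : ℝ) : ℝ :=
  tMillsConst ν m * (u ^ 2 + ν) ^ (-((ν - 1) / 2)) / √(u ^ 2 + ν - m)

section TailLowerBound

variable {ν m : ℝ}

lemma tMillsConst_pos (hν : 0 < ν) (hm : 0 < m) (hmν : m < ν) : 0 < tMillsConst ν m := by
  have := Gamma_pos_of_pos (by linarith : 0 < (ν + 1) / 2)
  have := Gamma_pos_of_pos (by linarith : 0 < ν / 2)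
  have := sub_pos.2 hmν
  unfold tMillsConst
  positivity

lemma tTailLowerBound_mul_rpow (hν : 0 < ν) (u : ℝ) :
    tTailLowerBound ν m u * (u ^ 2 + ν) ^ ((ν - 1) / 2) = tMillsConst ν m / √(u ^ 2 + ν - m) := by
  have hA : 0 < u ^ 2 + ν := by positivity
  rw [tTailLowerBound, div_mul_eq_mul_div, mul_assoc, ← rpow_add hA, neg_add_cancel, rpow_zero,
    mul_one]

lemma tendsto_tTailLowerBound (hν : 1 < ν) : Tendsto (tTailLowerBound ν m) atTop (𝓝 0) := by
  have hA : Tendsto (fun u : ℝ ↦ u ^ 2 + ν) atTop atTop :=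
    tendsto_atTop_add_const_right _ _ (tendsto_pow_atTop two_ne_zero)
  have hB : Tendsto (fun u : ℝ ↦ √(u ^ 2 + ν - m)) atTop atTop :=
    tendsto_sqrt_atTop.comp (tendsto_atTop_add_const_right _ _ hA)
  exact (((tendsto_rpow_neg_atTop (by linarith : 0 < (ν - 1) / 2)).comp hA).const_mul
    (tMillsConst ν m)).div_atTop hB

lemma hasDerivAt_tTailLowerBound (hm : 0 ≤ m) (hmν : m < ν) (u : ℝ) :
    HasDerivAt (tTailLowerBound ν m)
      (-(tMillsConst ν m * u * (ν * (u ^ 2 + ν - m) + m) / ((u ^ 2 + ν - m) * √(u ^ 2 + ν - m)) *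
        (u ^ 2 + ν) ^ (-((ν + 1) / 2)))) u := by
  have hB : 0 < u ^ 2 + ν - m := by nlinarith
  have hA : 0 < u ^ 2 + ν := by linarith
  have hA' : HasDerivAt (fun u : ℝ ↦ u ^ 2 + ν) (2 * u) u := by
    simpa using (hasDerivAt_pow 2 u).add_const ν
  refine (((hA'.rpow_const (p := -((ν - 1) / 2)) (.inl hA.ne')).const_mul (tMillsConst ν m)).div
    ((hA'.sub_const m).sqrt hB.ne') (sqrt_pos.2 hB).ne').congr_deriv ?_
  have hsq := sq_sqrt hB.le
  rw [show -((ν - 1) / 2) = -((ν + 1) / 2) + 1 by ring, rpow_add_one hA.ne',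
    show -((ν + 1) / 2) + 1 - 1 = -((ν + 1) / 2) by ring]
  field_simp
  rw [hsq]
  ring

lemma tPDF_eq_rpow (hν : 0 < ν) (u : ℝ) :
    tPDF ν u = Gamma ((ν + 1) / 2) / (√π * Gamma (ν / 2)) * ν ^ (ν / 2) *
      (u ^ 2 + ν) ^ (-((ν + 1) / 2)) := by
  have hA : 0 < u ^ 2 + ν := by positivity
  have hνp : ν ^ ((ν + 1) / 2) = ν ^ (ν / 2) * √ν := by
    rw [sqrt_eq_rpow, ← rpow_add hν]; ring_nf
  have := Gamma_pos_of_pos (by linarith : 0 < ν / 2)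
  have := sqrt_pos.2 hν
  have := sqrt_pos.2 pi_pos
  rw [tPDF, show 1 + u ^ 2 / ν = (u ^ 2 + ν) / ν by field_simp; ring, div_rpow hA.le hν.le,
    rpow_neg hν.le, sqrt_mul hν.le, hνp]
  field_simp

lemma neg_deriv_tTailLowerBound_le_tPDF (hν : 2 ≤ ν) (hm : 0 ≤ m) (hmν : m < ν) (u : ℝ) :
    tMillsConst ν m * u * (ν * (u ^ 2 + ν - m) + m) / ((u ^ 2 + ν - m) * √(u ^ 2 + ν - m)) *
      (u ^ 2 + ν) ^ (-((ν + 1) / 2)) ≤ tPDF ν u := by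
  have hB : 0 < u ^ 2 + ν - m := by nlinarith
  set C := Gamma ((ν + 1) / 2) / (√π * Gamma (ν / 2))
  have hC : 0 ≤ C := by
    have := Gamma_pos_of_pos (by linarith : 0 < (ν + 1) / 2)
    have := Gamma_pos_of_pos (by linarith : 0 < ν / 2)
    positivity
  rw [tPDF_eq_rpow (by linarith)]
  gcongr
  rw [div_le_iff₀ (by positivity)]
  calc tMillsConst ν m * u * (ν * (u ^ 2 + ν - m) + m)
      = C / 2 * ((ν - m) * m ^ (ν / 2 - 1) * u * (ν * (u ^ 2 + ν - m) + m)) := by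
        simp only [tMillsConst, C]; ring
    _ ≤ C / 2 * (2 * ν ^ (ν / 2) * ((u ^ 2 + ν - m) * √(u ^ 2 + ν - m))) :=
        mul_le_mul_of_nonneg_left (sub_mul_rpow_mul_le hν hm hmν.le) (by positivity)
    _ = C * ν ^ (ν / 2) * ((u ^ 2 + ν - m) * √(u ^ 2 + ν - m)) := by ring

lemma tTailLowerBound_le_one_sub_tCDF (hν : 2 ≤ ν) (hm : 0 < m) (hmν : m < ν) {t : ℝ}
    (ht : 0 ≤ t) : tTailLowerBound ν m t ≤ 1 - tCDF ν t := by
  have hκ := tMillsConst_pos (by linarith) hm hmν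
  rw [one_sub_tCDF (by linarith)]
  refine le_setIntegral_Ioi_of_hasDerivAt (fun u _ ↦ hasDerivAt_tTailLowerBound hm.le hmν u)
    (fun u hu ↦ ?_) (tendsto_tTailLowerBound (by linarith))
    (integrable_tPDF (by linarith)).integrableOn
    (fun u _ ↦ (neg_neg _).trans_le (neg_deriv_tTailLowerBound_le_tPDF hν hm.le hmν u))
  have hu₀ : 0 < u := ht.trans_lt hu
  have hB : 0 < u ^ 2 + ν - m := by nlinarith
  rw [neg_nonpos]
  positivity

end TailLowerBound

/-- A Mills-ratio type bound for the Student's t distribution. -/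
theorem mills_ratio_t (ν m : ℝ) (hν : 2 < ν) (hm : 0 < m) (hmν : m < ν) (t : ℝ) (ht : 0 < t) :
    1 / ((1 - tCDF ν t) * (t ^ 2 + ν) ^ ((ν - 1) / 2)) ≤
      Real.sqrt (t ^ 2 + ν - m) /
        (Real.Gamma ((ν + 1) / 2) * (ν - m) * m ^ (ν / 2 - 1) /
          (2 * Real.sqrt Real.pi * Real.Gamma (ν / 2))) := by
  have hν₀ : 0 < ν := by linarith
  have hA : 0 < (t ^ 2 + ν) ^ ((ν - 1) / 2) := by positivity
  have hG : 0 < tTailLowerBound ν m t * (t ^ 2 + ν) ^ ((ν - 1) / 2) := by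
    rw [tTailLowerBound_mul_rpow hν₀]
    exact div_pos (tMillsConst_pos hν₀ hm hmν) (sqrt_pos.2 (by nlinarith))
  calc 1 / ((1 - tCDF ν t) * (t ^ 2 + ν) ^ ((ν - 1) / 2))
      ≤ 1 / (tTailLowerBound ν m t * (t ^ 2 + ν) ^ ((ν - 1) / 2)) :=
        one_div_le_one_div_of_le hG (mul_le_mul_of_nonneg_right
          (tTailLowerBound_le_one_sub_tCDF hν.le hm hmν ht.le) hA.le)
    _ = √(t ^ 2 + ν - m) / tMillsConst ν m := by rw [tTailLowerBound_mul_rpow hν₀, one_div_div]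
end

section
/- Let ν > 2, t > 0, and let m be any real number with 0 < m < ν. Then ∫_0^{ν/(t²+ν)} u^{ν/2 − 1} (1 − u)^{−1/2} du ≥ m^{ν/2 − 1} (ν − m) / (√(t² + ν − m) · (t² + ν)^{(ν−1)/2}). -/
/-!
For `p = ν/2 - 1 ≥ 0` the integrand `u ^ p * (1 - u) ^ (-1/2)` is nondecreasing on `[0, 1)`.
With `s = t² + ν`, the interval `(0, ν/s)` contains `(m/s, ν/s)`, on which the integrand is at
least its value at `m/s`; so the integral is at least `(m/s) ^ p * (1 - m/s) ^ (-1/2) * (ν - m)/s`,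
which simplifies to the stated bound since `p + 1/2 = (ν - 1)/2`.
-/

open MeasureTheory Set

theorem monotoneOn_rpow_mul_one_sub_rpow_neg {p q : ℝ} (hp : 0 ≤ p) (hq : 0 ≤ q) :
    MonotoneOn (fun u : ℝ => u ^ p * (1 - u) ^ (-q)) (Ico 0 1) := by
  refine MonotoneOn.mul (f := fun u : ℝ => u ^ p) (g := fun u : ℝ => (1 - u) ^ (-q)) ?_ ?_
    (fun u hu => Real.rpow_nonneg hu.1 p) (fun u hu => Real.rpow_nonneg (sub_nonneg.2 hu.2.le) _)
  · exact (Real.monotoneOn_rpow_Ici_of_exponent_nonneg hp).mono Ico_subset_Ici_self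
  · intro u _ v hv huv
    exact Real.rpow_le_rpow_of_nonpos (sub_pos.2 hv.2) (by linarith) (neg_nonpos.2 hq)

theorem MonotoneOn.mul_sub_le_intervalIntegral {f : ℝ → ℝ} {a b : ℝ}
    (hf : MonotoneOn f (Icc a b)) (hab : a ≤ b) : f a * (b - a) ≤ ∫ u in a..b, f u := by
  have hconst : ∫ _ in a..b, f a = f a * (b - a) := by
    rw [intervalIntegral.integral_const, smul_eq_mul, mul_comm]
  rw [← hconst]
  refine intervalIntegral.integral_mono_on hab intervalIntegrable_const ?_
    fun x hx => hf (left_mem_Icc.2 hab) hx hx.1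
  exact MonotoneOn.intervalIntegrable (by rwa [uIcc_of_le hab])

theorem MonotoneOn.mul_sub_le_setIntegral_Ioo {f : ℝ → ℝ} {a b c : ℝ}
    (hf : MonotoneOn f (Icc c b)) (hfc : 0 ≤ f c) (hca : c ≤ a) (hab : a ≤ b) :
    f a * (b - a) ≤ ∫ u in Ioo c b, f u := by
  have hint : ∀ x y, c ≤ x → x ≤ y → y ≤ b → IntervalIntegrable f volume x y :=
    fun x y hx hxy hy => MonotoneOn.intervalIntegrable
      (hf.mono (by rw [uIcc_of_le hxy]; exact Icc_subset_Icc hx hy))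
  have hleft : 0 ≤ ∫ u in c..a, f u :=
    intervalIntegral.integral_nonneg hca fun u hu =>
      hfc.trans (hf (left_mem_Icc.2 (hca.trans hab)) ⟨hu.1, hu.2.trans hab⟩ hu.1)
  have hright := (hf.mono (Icc_subset_Icc_left hca)).mul_sub_le_intervalIntegral hab
  rw [← integral_Ioc_eq_integral_Ioo, ← intervalIntegral.integral_of_le (hca.trans hab),
    ← intervalIntegral.integral_add_adjacent_intervals (hint c a le_rfl hca hab)
      (hint a b hca hab le_rfl)]
  linarith

theorem rpow_mul_one_sub_rpow_neg_half_mul_div {m s d p : ℝ} (hm : 0 ≤ m) (hms : m < s) :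
    (m / s) ^ p * (1 - m / s) ^ (-(1 / 2) : ℝ) * (d / s) =
      m ^ p * d / (Real.sqrt (s - m) * s ^ (p + 1 / 2)) := by
  have hs : 0 < s := hm.trans_lt hms
  have hsm : 0 < s - m := sub_pos.2 hms
  have hone_sub : 1 - m / s = (s - m) / s := by field_simp
  rw [hone_sub, Real.div_rpow hm hs.le, Real.rpow_neg (div_nonneg hsm.le hs.le),
    Real.div_rpow hsm.le hs.le, inv_div, Real.sqrt_eq_rpow, Real.rpow_add hs]
  have hsq : (s ^ (1 / 2 : ℝ)) ^ 2 = s := by rw [← Real.sqrt_eq_rpow, Real.sq_sqrt hs.le]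
  have : 0 < s ^ p := Real.rpow_pos_of_pos hs p
  have : 0 < s ^ (1 / 2 : ℝ) := Real.rpow_pos_of_pos hs _
  have : 0 < (s - m) ^ (1 / 2 : ℝ) := Real.rpow_pos_of_pos hsm _
  field_simp
  rw [hsq]

/-- Lower bound for the incomplete beta integral appearing in the Mills-ratio type lemma. -/
theorem incomplete_beta_integral_lower_bound (ν m t : ℝ) (hν : 2 < ν) (ht : 0 < t)
    (hm : 0 < m) (hmν : m < ν) :
    m ^ (ν / 2 - 1) * (ν - m) / (Real.sqrt (t ^ 2 + ν - m) * (t ^ 2 + ν) ^ ((ν - 1) / 2)) ≤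
      ∫ u in Set.Ioo (0 : ℝ) (ν / (t ^ 2 + ν)), u ^ (ν / 2 - 1) * (1 - u) ^ (-(1 / 2) : ℝ) := by
  set s := t ^ 2 + ν
  have hνs : ν < s := lt_add_of_pos_left ν (pow_pos ht 2)
  have hs : 0 < s := (by linarith : (0 : ℝ) < ν).trans hνs
  have hmono := (monotoneOn_rpow_mul_one_sub_rpow_neg (p := ν / 2 - 1) (q := 1 / 2)
    (by linarith) (by norm_num)).mono (Icc_subset_Ico_right ((div_lt_one hs).2 hνs))
  have hbound := hmono.mul_sub_le_setIntegral_Ioo (a := m / s) (by positivity)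
    (by positivity) (div_le_div_of_nonneg_right hmν.le hs.le)
  rw [← sub_div, rpow_mul_one_sub_rpow_neg_half_mul_div hm.le (hmν.trans hνs)] at hbound
  convert hbound using 4
  ring
end

section
/- Let n, p ≥ 1 and let A be any real n × p matrix. Then the matrices AᵀA + I_p, I_n + A(AᵀA + I_p)^{−1}Aᵀ, and 2AᵀA + I_p are invertible, and (2AᵀA + I_p) − 4 Aᵀ (I_n + A(AᵀA + I_p)^{−1}Aᵀ)^{−1} A = (2AᵀA + I_p)^{−1}. -/
open Matrix

lemma psd_transpose_mul_self {n p : ℕ} (A : Matrix (Fin n) (Fin p) ℝ) :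
    (Aᵀ * A).PosSemidef := by
  simpa using Matrix.posSemidef_conjTranspose_mul_self A

lemma psd_add_one_posDef {m : ℕ} {B : Matrix (Fin m) (Fin m) ℝ}
    (hB : B.PosSemidef) : (B + 1).PosDef :=
  Matrix.PosDef.posSemidef_add hB Matrix.PosDef.one

lemma inv_comm_aux {m k : ℕ} (X : Matrix (Fin m) (Fin m) ℝ) (Y : Matrix (Fin k) (Fin k) ℝ)
    (C : Matrix (Fin m) (Fin k) ℝ) (hX : IsUnit X) (hY : IsUnit Y)
    (h : X * C = C * Y) : X⁻¹ * C = C * Y⁻¹ := by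
  have hX' : IsUnit X.det := (Matrix.isUnit_iff_isUnit_det X).mp hX
  have hY' : IsUnit Y.det := (Matrix.isUnit_iff_isUnit_det Y).mp hY
  calc X⁻¹ * C = X⁻¹ * C * (Y * Y⁻¹) := by
        rw [Matrix.mul_nonsing_inv _ hY', Matrix.mul_one]
    _ = X⁻¹ * (C * Y) * Y⁻¹ := by simp only [Matrix.mul_assoc]
    _ = X⁻¹ * (X * C) * Y⁻¹ := by rw [h]
    _ = (X⁻¹ * X) * (C * Y⁻¹) := by simp only [Matrix.mul_assoc]
    _ = C * Y⁻¹ := by rw [Matrix.nonsing_inv_mul _ hX', Matrix.one_mul]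

/-- The matrix identity behind Step V of the proof of Theorem 1:
`(2AᵀA + I) − 4Aᵀ(I + A(AᵀA + I)⁻¹Aᵀ)⁻¹A = (2AᵀA + I)⁻¹`, together with the
invertibility of the three matrices involved. -/
theorem robit_matrix_identity (n p : ℕ) (hn : 1 ≤ n) (hp : 1 ≤ p)
    (A : Matrix (Fin n) (Fin p) ℝ) :
    IsUnit (Aᵀ * A + 1) ∧
    IsUnit ((1 : Matrix (Fin n) (Fin n) ℝ) + A * (Aᵀ * A + 1)⁻¹ * Aᵀ) ∧
    IsUnit (2 * (Aᵀ * A) + 1) ∧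
    2 * (Aᵀ * A) + 1 -
        4 * (Aᵀ * ((1 : Matrix (Fin n) (Fin n) ℝ) + A * (Aᵀ * A + 1)⁻¹ * Aᵀ)⁻¹ * A) =
      (2 * (Aᵀ * A) + 1)⁻¹ := by
  set B := Aᵀ * A with hBdef
  set C := A * Aᵀ with hCdef
  have hBpsd : B.PosSemidef := psd_transpose_mul_self A
  have hCpsd : C.PosSemidef := by
    simpa using psd_transpose_mul_self Aᵀ
  have hC1pd : (C + 1).PosDef := psd_add_one_posDef hCpsd
  have hB1 : IsUnit (B + 1) := (psd_add_one_posDef hBpsd).isUnit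
  have hC1 : IsUnit (C + 1) := hC1pd.isUnit
  have h2B : IsUnit (2 * B + 1) := by
    have h : (2 : Matrix (Fin p) (Fin p) ℝ) * B + 1 = B + (B + 1) := by noncomm_ring
    rw [h]
    exact (Matrix.PosDef.posSemidef_add hBpsd (psd_add_one_posDef hBpsd)).isUnit
  have h2C : IsUnit (2 * C + 1) := by
    have h : (2 : Matrix (Fin n) (Fin n) ℝ) * C + 1 = C + (C + 1) := by noncomm_ring
    rw [h]
    exact (Matrix.PosDef.posSemidef_add hCpsd (psd_add_one_posDef hCpsd)).isUnit
  -- push-pull: A * (B+1)⁻¹ = (C+1)⁻¹ * A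
  have hcomm1 : (C + 1) * A = A * (B + 1) := by
    simp [hBdef, hCdef, Matrix.add_mul, Matrix.mul_add, Matrix.mul_assoc]
  have hpp1 : (C + 1)⁻¹ * A = A * (B + 1)⁻¹ := inv_comm_aux _ _ _ hC1 hB1 hcomm1
  have hC1' : IsUnit (C + 1).det := (Matrix.isUnit_iff_isUnit_det _).mp hC1
  -- M = 1 + A (B+1)⁻¹ Aᵀ = (C+1)⁻¹ (2C+1)
  have hM : (1 : Matrix (Fin n) (Fin n) ℝ) + A * (B + 1)⁻¹ * Aᵀ
      = (C + 1)⁻¹ * (2 * C + 1) := by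
    have h1 : A * (B + 1)⁻¹ * Aᵀ = (C + 1)⁻¹ * C := by
      rw [← hpp1, Matrix.mul_assoc, ← hCdef]
    have h2 : (C + 1)⁻¹ * (2 * C + 1) = (C + 1)⁻¹ * (C + 1) + (C + 1)⁻¹ * C := by
      noncomm_ring
    rw [h1, h2, Matrix.nonsing_inv_mul _ hC1']
  have hMunit : IsUnit ((1 : Matrix (Fin n) (Fin n) ℝ) + A * (B + 1)⁻¹ * Aᵀ) := by
    rw [hM]; exact hC1pd.inv.isUnit.mul h2C
  refine ⟨hB1, hMunit, h2B, ?_⟩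
  -- M⁻¹ = (2C+1)⁻¹ * (C+1)
  have hMinv : ((1 : Matrix (Fin n) (Fin n) ℝ) + A * (B + 1)⁻¹ * Aᵀ)⁻¹
      = (2 * C + 1)⁻¹ * (C + 1) := by
    rw [hM, Matrix.mul_inv_rev, Matrix.nonsing_inv_nonsing_inv _ hC1']
  -- push-pull: Aᵀ (2C+1)⁻¹ = (2B+1)⁻¹ Aᵀ
  have hcomm2 : (2 * B + 1) * Aᵀ = Aᵀ * (2 * C + 1) := by
    simp [hBdef, hCdef, Matrix.add_mul, Matrix.mul_add, Matrix.mul_assoc, two_mul]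
  have hpp2 : (2 * B + 1)⁻¹ * Aᵀ = Aᵀ * (2 * C + 1)⁻¹ := inv_comm_aux _ _ _ h2B h2C hcomm2
  have hterm : Aᵀ * ((1 : Matrix (Fin n) (Fin n) ℝ) + A * (B + 1)⁻¹ * Aᵀ)⁻¹ * A
      = (2 * B + 1)⁻¹ * (B * B + B) := by
    rw [hMinv, ← Matrix.mul_assoc, ← hpp2]
    have h3 : Aᵀ * ((C + 1) * A) = B * B + B := by
      simp [hBdef, hCdef, Matrix.add_mul, Matrix.mul_add, Matrix.mul_assoc]
    rw [Matrix.mul_assoc, Matrix.mul_assoc, h3]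
  rw [hterm]
  -- final: (2B+1) - 4 (2B+1)⁻¹ (B² + B) = (2B+1)⁻¹
  have h2B' : IsUnit (2 * B + 1).det := (Matrix.isUnit_iff_isUnit_det _).mp h2B
  refine (Matrix.inv_eq_left_inv ?_).symm
  have key : (2 * B + 1)⁻¹ * ((B * B + B) * (2 * B + 1)) = B * B + B := by
    have h : (B * B + B) * (2 * B + 1) = (2 * B + 1) * (B * B + B) := by noncomm_ring
    rw [h, ← Matrix.mul_assoc, Matrix.nonsing_inv_mul _ h2B', Matrix.one_mul]
  calc (2 * B + 1 - 4 * ((2 * B + 1)⁻¹ * (B * B + B))) * (2 * B + 1)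
      = (2 * B + 1) * (2 * B + 1)
        - 4 * ((2 * B + 1)⁻¹ * ((B * B + B) * (2 * B + 1))) := by noncomm_ring
    _ = (2 * B + 1) * (2 * B + 1) - 4 * (B * B + B) := by rw [key]
    _ = 1 := by noncomm_ring
end

section
/- Let n, p ≥ 1 and let A be any real n × p matrix. Define Ω(A) = (2AᵀA + I_p) − 4 Aᵀ (I_n + A(AᵀA + I_p)^{−1}Aᵀ)^{−1} A. Then Ω(A) is a symmetric positive definite matrix, and every eigenvalue of Ω(A) is at most 1 (equivalently, 0 ≺ Ω(A) ⪯ I_p in the Loewner order). In particular, for every real n × p matrix W and every λ ∈ (0,∞)ⁿ with Λ = diag(λ), the quadratic form G(θ, λ) = θᵀ[(2WᵀΛW + I_p) − 4WᵀΛ(Λ + ΛW(WᵀΛW + I_p)^{−1}WᵀΛ)^{−1}ΛW]θ is a positive definite quadratic form in θ ∈ ℝ^p. -/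
/-!
By the Woodbury identity, `(I + A(AᵀA + I)⁻¹Aᵀ)⁻¹ = I - A(2AᵀA + I)⁻¹Aᵀ`, and substituting this
collapses `Ω(A)` to `(2AᵀA + I)⁻¹`: the inverse of a matrix `⪰ I`, hence `0 ≺ Ω(A) ⪯ I`.
Writing `Λ = RᵀR` with `R = Λ^{1/2}`, the matrix of the form `G(·, λ)` is `Ω(RW)`.
-/

open Matrix
open scoped ComplexOrder

lemma Matrix.PosSemidef.one_sub_inv_add_one {𝕜 q : Type*} [RCLike 𝕜] [Fintype q] [DecidableEq q]
    {B : Matrix q q 𝕜} (hB : B.PosSemidef) : (1 - (B + 1)⁻¹).PosSemidef := by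
  have hC : (B + 1).PosDef := PosDef.posSemidef_add hB .one
  have : Invertible (B + 1) := hC.isUnit.invertible
  have hsandwich : 1 - (B + 1)⁻¹ = (B + 1)⁻¹ * (Bᴴ * B + B) * ((B + 1)⁻¹)ᴴ := by
    rw [hC.inv.isHermitian.eq, hB.isHermitian.eq, show B * B + B = (B + 1) * B by noncomm_ring,
      inv_mul_cancel_left_of_invertible, eq_comm, eq_sub_iff_add_eq]
    nth_rewrite 2 [← one_mul (B + 1)⁻¹]
    rw [← add_mul, mul_inv_of_invertible]
  rw [hsandwich]
  exact ((posSemidef_conjTranspose_mul_self B).add hB).mul_mul_conjTranspose_same _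

section Omega

variable {m q : Type*} [Fintype m] [Fintype q] [DecidableEq q]

lemma posSemidef_two_mul_transpose_mul_self (A : Matrix m q ℝ) : (2 * (Aᵀ * A)).PosSemidef := by
  have hB : (Aᵀ * A).PosSemidef := by simpa using posSemidef_conjTranspose_mul_self A
  rw [two_mul]
  exact hB.add hB

lemma posDef_two_mul_transpose_mul_self_add_one (A : Matrix m q ℝ) :
    (2 * (Aᵀ * A) + 1).PosDef :=
  PosDef.posSemidef_add (posSemidef_two_mul_transpose_mul_self A) .one

variable [DecidableEq m]

noncomputable def robitOmega (A : Matrix m q ℝ) : Matrix q q ℝ :=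
  2 * (Aᵀ * A) + 1 - 4 * (Aᵀ * (1 + A * (Aᵀ * A + 1)⁻¹ * Aᵀ)⁻¹ * A)

lemma inv_one_add_mul_inv_mul_transpose (A : Matrix m q ℝ) :
    (1 + A * (Aᵀ * A + 1)⁻¹ * Aᵀ)⁻¹ = 1 - A * (2 * (Aᵀ * A) + 1)⁻¹ * Aᵀ := by
  have hS : (Aᵀ * A + 1).PosDef := by
    simpa using PosDef.posSemidef_add (posSemidef_conjTranspose_mul_self A) .one
  have : Invertible (Aᵀ * A + 1) := hS.isUnit.invertible
  have hsum : (Aᵀ * A + 1)⁻¹⁻¹ + Aᵀ * (1 : Matrix m m ℝ)⁻¹ * A = 2 * (Aᵀ * A) + 1 := by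
    rw [inv_inv_of_invertible, inv_one, Matrix.mul_one, two_mul]
    abel
  rw [add_mul_mul_inv_eq_sub _ _ _ _ isUnit_one hS.inv.isUnit
    (hsum ▸ (posDef_two_mul_transpose_mul_self_add_one A).isUnit), hsum]
  simp

lemma robitOmega_eq_inv (A : Matrix m q ℝ) : robitOmega A = (2 * (Aᵀ * A) + 1)⁻¹ := by
  have : Invertible (2 * (Aᵀ * A) + 1) :=
    (posDef_two_mul_transpose_mul_self_add_one A).isUnit.invertible
  have hconj : Aᵀ * (1 - A * (2 * (Aᵀ * A) + 1)⁻¹ * Aᵀ) * A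
      = Aᵀ * A - Aᵀ * A * (2 * (Aᵀ * A) + 1)⁻¹ * (Aᵀ * A) := by
    simp only [Matrix.mul_sub, Matrix.sub_mul, Matrix.mul_one, Matrix.mul_assoc]
  rw [robitOmega, inv_one_add_mul_inv_mul_transpose, hconj]
  set B := Aᵀ * A
  set C := 2 * B + 1
  have h2B : 2 * B = C - 1 := (add_sub_cancel_right _ _).symm
  calc C - 4 * (B - B * C⁻¹ * B)
      = C - 2 * B - 2 * B + 2 * B * C⁻¹ * (2 * B) := by noncomm_ring
    _ = C - (C - 1) - (C - 1) + (C - 1) * C⁻¹ * (C - 1) := by rw [h2B]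
    _ = C⁻¹ := by
        simp only [sub_mul, mul_sub, mul_inv_of_invertible, inv_mul_of_invertible, one_mul,
          mul_one]
        abel

lemma robitOmega_mul {R D : Matrix m m ℝ} [Invertible R] (hD : Rᵀ * R = D) (W : Matrix m q ℝ) :
    robitOmega (R * W) = 2 * (Wᵀ * D * W) + 1 -
      4 * (Wᵀ * D * (D + D * W * (Wᵀ * D * W + 1)⁻¹ * Wᵀ * D)⁻¹ * D * W) := by
  have hgram : (R * W)ᵀ * (R * W) = Wᵀ * D * W := by
    rw [transpose_mul, ← hD]
    simp only [Matrix.mul_assoc]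
  have hmid : D + D * W * (Wᵀ * D * W + 1)⁻¹ * Wᵀ * D
      = Rᵀ * (1 + R * W * (Wᵀ * D * W + 1)⁻¹ * (R * W)ᵀ) * R := by
    rw [transpose_mul, ← hD]
    simp only [Matrix.mul_add, Matrix.add_mul, Matrix.mul_one, Matrix.mul_assoc]
  rw [robitOmega, hgram, hmid, Matrix.mul_inv_rev, Matrix.mul_inv_rev, ← hD, transpose_mul]
  simp only [Matrix.mul_assoc, mul_inv_cancel_left_of_invertible,
    inv_mul_cancel_left_of_invertible]

end Omega

theorem robit_Omega_posDef_le_one_general (n p : ℕ)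
    (A : Matrix (Fin n) (Fin p) ℝ) :
    (2 * (Aᵀ * A) + 1 -
        4 * (Aᵀ * ((1 : Matrix (Fin n) (Fin n) ℝ) + A * (Aᵀ * A + 1)⁻¹ * Aᵀ)⁻¹ * A)).IsSymm ∧
    (2 * (Aᵀ * A) + 1 -
        4 * (Aᵀ * ((1 : Matrix (Fin n) (Fin n) ℝ) + A * (Aᵀ * A + 1)⁻¹ * Aᵀ)⁻¹ * A)).PosDef ∧
    ((1 : Matrix (Fin p) (Fin p) ℝ) -
        (2 * (Aᵀ * A) + 1 -
          4 * (Aᵀ * ((1 : Matrix (Fin n) (Fin n) ℝ) + A * (Aᵀ * A + 1)⁻¹ * Aᵀ)⁻¹ * A))).PosSemidef ∧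
    ∀ (W : Matrix (Fin n) (Fin p) ℝ) (l : Fin n → ℝ), (∀ i, 0 < l i) →
      ∀ θ : Fin p → ℝ, θ ≠ 0 →
        0 < θ ⬝ᵥ ((2 * (Wᵀ * Matrix.diagonal l * W) + 1 -
            4 * (Wᵀ * Matrix.diagonal l *
              (Matrix.diagonal l + Matrix.diagonal l * W * (Wᵀ * Matrix.diagonal l * W + 1)⁻¹ *
                Wᵀ * Matrix.diagonal l)⁻¹ * Matrix.diagonal l * W)) *ᵥ θ) := by
  rw [← robitOmega, robitOmega_eq_inv]
  have hpos := (posDef_two_mul_transpose_mul_self_add_one A).inv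
  refine ⟨isHermitian_iff_isSymm.mp hpos.isHermitian, hpos,
    (posSemidef_two_mul_transpose_mul_self A).one_sub_inv_add_one, fun W l hl θ hθ => ?_⟩
  let R := diagonal fun i => √(l i)
  have : Invertible R :=
    (posDef_diagonal_iff.mpr fun i => Real.sqrt_pos.mpr (hl i)).isUnit.invertible
  have hD : Rᵀ * R = diagonal l := by
    rw [diagonal_transpose, diagonal_mul_diagonal]
    exact congrArg diagonal (funext fun i => Real.mul_self_sqrt (hl i).le)
  rw [← robitOmega_mul hD, robitOmega_eq_inv]
  exact (posDef_two_mul_transpose_mul_self_add_one (R * W)).inv.dotProduct_mulVec_pos hθ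

/-- `Ω(A) = (2AᵀA + I) − 4Aᵀ(I + A(AᵀA + I)⁻¹Aᵀ)⁻¹A` is symmetric positive definite with all
eigenvalues at most `1` (i.e. `0 ≺ Ω(A) ⪯ I` in the Loewner order), and consequently the
quadratic form `G(θ, λ)` appearing in Step V of the proof of Theorem 1 is positive definite. -/
theorem robit_Omega_posDef_le_one (n p : ℕ) (hn : 1 ≤ n) (hp : 1 ≤ p)
    (A : Matrix (Fin n) (Fin p) ℝ) :
    (2 * (Aᵀ * A) + 1 -
        4 * (Aᵀ * ((1 : Matrix (Fin n) (Fin n) ℝ) + A * (Aᵀ * A + 1)⁻¹ * Aᵀ)⁻¹ * A)).IsSymm ∧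
    (2 * (Aᵀ * A) + 1 -
        4 * (Aᵀ * ((1 : Matrix (Fin n) (Fin n) ℝ) + A * (Aᵀ * A + 1)⁻¹ * Aᵀ)⁻¹ * A)).PosDef ∧
    ((1 : Matrix (Fin p) (Fin p) ℝ) -
        (2 * (Aᵀ * A) + 1 -
          4 * (Aᵀ * ((1 : Matrix (Fin n) (Fin n) ℝ) + A * (Aᵀ * A + 1)⁻¹ * Aᵀ)⁻¹ * A))).PosSemidef ∧
    ∀ (W : Matrix (Fin n) (Fin p) ℝ) (l : Fin n → ℝ), (∀ i, 0 < l i) →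
      ∀ θ : Fin p → ℝ, θ ≠ 0 →
        0 < θ ⬝ᵥ ((2 * (Wᵀ * Matrix.diagonal l * W) + 1 -
            4 * (Wᵀ * Matrix.diagonal l *
              (Matrix.diagonal l + Matrix.diagonal l * W * (Wᵀ * Matrix.diagonal l * W + 1)⁻¹ *
                Wᵀ * Matrix.diagonal l)⁻¹ * Matrix.diagonal l * W)) *ᵥ θ) :=
  robit_Omega_posDef_le_one_general n p A
end
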